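/- arXiv:1606.06390 — 4 statements merged into one kernel-verified Lean document; each statement's English description precedes it below -/
import Mathlib

section
/- Let K be a field, let j and n be positive integers with j < n, let L be an (n−j)×(n−j) symmetric matrix over K, B an (n−j)×j matrix over K, and M an invertible symmetric j×j matrix over K, and let S be the n×n symmetric block matrix S = [[L, B],[Bᵀ, M]]. Write J = {n−j+1, …, n} for the index set of the M-block. Then for all i, i' ∈ {1, …, n−j}, the (j+1)×(j+1) minor of S obtained by keeping the rows indexed by {i} ∪ J and the columns indexed by {i'} ∪ J equals (L − B M⁻¹ Bᵀ)_{i,i'} · det M. -/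
open Matrix

namespace Matrix

variable {R : Type*} {l l' m m' n n' o o' : Type*}

theorem fromBlocks_submatrix_sum_map (A : Matrix m m' R) (B : Matrix m n' R)
    (C : Matrix n m' R) (D : Matrix n n' R) (f : l → m) (g : o → n) (f' : l' → m')
    (g' : o' → n') :
    (fromBlocks A B C D).submatrix (Sum.map f g) (Sum.map f' g') =
      fromBlocks (A.submatrix f f') (B.submatrix f g') (C.submatrix g f') (D.submatrix g g') := by
  ext (a | a) (b | b) <;> rfl

/-- The `1 × 1` Schur complement of `D` in this minor is the `(i, i')` entry of `A - B D⁻¹ C`. -/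
theorem det_fromBlocks_submatrix_single_inl [CommRing R] [Fintype n] [DecidableEq n]
    (A : Matrix m m' R) (B : Matrix m n R) (C : Matrix n m' R) (D : Matrix n n R)
    (hD : IsUnit D.det) (i : m) (i' : m') :
    ((fromBlocks A B C D).submatrix (Sum.map (fun _ : Unit => i) id)
        (Sum.map (fun _ : Unit => i') id)).det =
      (A - B * D⁻¹ * C) i i' * D.det := by
  let := D.invertibleOfIsUnitDet hD
  rw [fromBlocks_submatrix_sum_map, submatrix_id_id, det_fromBlocks₂₂, mul_comm,
    det_unique, invOf_eq_nonsing_inv]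
  rfl

end Matrix

theorem stmt_0_general (K : Type*) [Field K] (n j : ℕ)
    (L : Matrix (Fin (n - j)) (Fin (n - j)) K)
    (B : Matrix (Fin (n - j)) (Fin j) K)
    (M : Matrix (Fin j) (Fin j) K) (hMunit : IsUnit M.det)
    (i i' : Fin (n - j)) :
    ((Matrix.fromBlocks L B Bᵀ M).submatrix
        (Sum.elim (fun _ : Unit => Sum.inl i) Sum.inr)
        (Sum.elim (fun _ : Unit => Sum.inl i') Sum.inr)).det
      = (L - B * M⁻¹ * Bᵀ) i i' * M.det :=
  det_fromBlocks_submatrix_single_inl L B Bᵀ M hMunit i i'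

/-- Key minor computation in Lemma 3.6 of the paper: for the symmetric block matrix
`S = [[L, B], [Bᵀ, M]]` with `M` an invertible symmetric `j × j` block, the
`(j+1) × (j+1)` minor of `S` keeping the rows `{i} ∪ J` and columns `{i'} ∪ J`
(where `J` indexes the `M`-block) equals `(L - B M⁻¹ Bᵀ)_{i,i'} · det M`. -/
theorem stmt_0 (K : Type*) [Field K] (n j : ℕ) (hj : 0 < j) (hjn : j < n)
    (L : Matrix (Fin (n - j)) (Fin (n - j)) K) (hL : Lᵀ = L)
    (B : Matrix (Fin (n - j)) (Fin j) K)
    (M : Matrix (Fin j) (Fin j) K) (hM : Mᵀ = M) (hMunit : IsUnit M.det)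
    (i i' : Fin (n - j)) :
    ((Matrix.fromBlocks L B Bᵀ M).submatrix
        (Sum.elim (fun _ : Unit => Sum.inl i) Sum.inr)
        (Sum.elim (fun _ : Unit => Sum.inl i') Sum.inr)).det
      = (L - B * M⁻¹ * Bᵀ) i i' * M.det :=
  stmt_0_general K n j L B M hMunit i i'
end

section
/- Let p be an odd prime, let j and n be positive integers with j < n, and let S be a symmetric n×n matrix over ℚ all of whose entries have p-adic valuation ≥ 0, written in block form S = [[L, B],[Bᵀ, M]] where M is a j×j block with ν_p(det M) = 0 (det M is a p-adic unit). If every (j+1)×(j+1) minor of S has p-adic valuation ≥ 1 (i.e., is ≡ 0 mod p), then every entry of the Schur complement L − B M⁻¹ Bᵀ has p-adic valuation ≥ 1. -/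
open Matrix

/-- Arithmetic content of Lemma 3.6 of the paper: let `p` be an odd prime and let
`S = [[L, B], [Bᵀ, M]]` be a symmetric matrix over `ℚ` with `p`-integral entries
(`padicNorm p ≤ 1`) whose `j × j` block `M` has determinant a `p`-adic unit.
If every `(j+1) × (j+1)` minor of `S` has `p`-adic valuation `≥ 1`
(`padicNorm p < 1`), then every entry of the Schur complement `L - B M⁻¹ Bᵀ`
has `p`-adic valuation `≥ 1`. -/
theorem stmt_1 (p : ℕ) (hp : p.Prime) (hpodd : Odd p)
    (n j : ℕ) (hj : 0 < j) (hjn : j < n)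
    (L : Matrix (Fin (n - j)) (Fin (n - j)) ℚ) (hL : Lᵀ = L)
    (B : Matrix (Fin (n - j)) (Fin j) ℚ)
    (M : Matrix (Fin j) (Fin j) ℚ) (hM : Mᵀ = M)
    (hint : ∀ r c, padicNorm p (Matrix.fromBlocks L B Bᵀ M r c) ≤ 1)
    (hMdet : padicNorm p M.det = 1)
    (hminor : ∀ r c : Fin (j + 1) → Fin (n - j) ⊕ Fin j,
      Function.Injective r → Function.Injective c →
      padicNorm p ((Matrix.fromBlocks L B Bᵀ M).submatrix r c).det < 1) :
    ∀ i i', padicNorm p ((L - B * M⁻¹ * Bᵀ) i i') < 1 := by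
  haveI : Fact p.Prime := ⟨hp⟩
  intro i i'
  have hMdet0 : M.det ≠ 0 := by
    intro h; rw [h, padicNorm.zero] at hMdet; norm_num at hMdet
  haveI : Invertible M := M.invertibleOfIsUnitDet (isUnit_iff_ne_zero.mpr hMdet0)
  -- the equivalence Fin (j+1) ≃ Fin 1 ⊕ Fin j
  let e : Fin (j + 1) ≃ Fin 1 ⊕ Fin j :=
    (finCongr (Nat.add_comm j 1)).trans finSumFinEquiv.symm
  let r' : Fin 1 ⊕ Fin j → Fin (n - j) ⊕ Fin j := Sum.map (fun _ => i) id
  let c' : Fin 1 ⊕ Fin j → Fin (n - j) ⊕ Fin j := Sum.map (fun _ => i') id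
  have hr'inj : Function.Injective r' := by
    intro x y hxy
    cases x <;> cases y <;>
      first
        | exact congrArg Sum.inl (Subsingleton.elim _ _)
        | simp_all [r']
  have hc'inj : Function.Injective c' := by
    intro x y hxy
    cases x <;> cases y <;>
      first
        | exact congrArg Sum.inl (Subsingleton.elim _ _)
        | simp_all [c']
  have key := hminor (r' ∘ e) (c' ∘ e) (hr'inj.comp e.injective) (hc'inj.comp e.injective)
  have hsub : (Matrix.fromBlocks L B Bᵀ M).submatrix (r' ∘ e) (c' ∘ e)
      = ((Matrix.fromBlocks L B Bᵀ M).submatrix r' c').submatrix e e := rfl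
  have hblocks : (Matrix.fromBlocks L B Bᵀ M).submatrix r' c' =
      Matrix.fromBlocks (Matrix.of fun _ _ : Fin 1 => L i i')
        (Matrix.of fun (_ : Fin 1) k => B i k)
        (Matrix.of fun k (_ : Fin 1) => Bᵀ k i') M := by
    ext x y
    cases x <;> cases y <;> rfl
  have hdet : ((Matrix.fromBlocks L B Bᵀ M).submatrix (r' ∘ e) (c' ∘ e)).det
      = M.det * ((L - B * M⁻¹ * Bᵀ) i i') := by
    rw [hsub, Matrix.det_submatrix_equiv_self, hblocks, Matrix.det_fromBlocks₂₂]
    congr 1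
    rw [Matrix.det_fin_one]
    have hinv : ⅟M = M⁻¹ := invOf_eq_nonsing_inv M
    rw [hinv]
    simp [Matrix.sub_apply, Matrix.mul_apply, Finset.mul_sum, Finset.sum_mul]
  rw [hdet] at key
  rwa [padicNorm.mul, hMdet, one_mul] at key
end

section
/- Let N, M, k be positive integers, let χ be a Dirichlet character modulo N with values in ℂ, and let f : ℍ → ℂ be a function satisfying the weight-k equivariance f ∣[k] γ = χ(d)·f for all γ = (a b; c d) ∈ Γ₀(N), where (f ∣[k] γ)(τ) = (cτ + d)^{−k} f((aτ+b)/(cτ+d)). Define g : ℍ → ℂ by g(τ) = (1/M) Σ_{s=0}^{M−1} f(τ + s/M). Then g ∣[k] γ = χ(d)·g for all γ = (a b; c d) ∈ Γ₀(N M²). -/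
/-!
For `γ = (a b; c d) ∈ Γ₀(N M²)` and every `s`, the matrix `T^{s/M} γ T^{-s d²/M}` is integral and
lies in `Γ₀(N)`: `M ∣ c` makes the diagonal entries integral, and `M² ∣ c` together with
`a d ≡ 1 (mod M)` the upper right one. Its lower row is `(c, d - c s d²/M)`, so it has the same
automorphy factor at `s d²/M + τ` as `γ` at `τ`, and the same lower right entry modulo `N`. Hence
`γ` permutes the `M` translates `f(τ + s/M)` up to the factor `χ(d) (cτ + d)^k`, sending `s` to
`s d² mod M`; since `d` is a unit modulo `M` and `f` is `1`-periodic, this is a reindexing of the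
sum defining `g`.
-/

open UpperHalfPlane CongruenceSubgroup MatrixGroups

/-- `f ∣[k] γ = χ(d) f` for all `γ ∈ Γ₀(L)`; the level `L` may differ from the modulus of `χ`. -/
def IsSlashEquivariant {N : ℕ} (L k : ℕ) (χ : DirichletCharacter ℂ N) (f : ℍ → ℂ) : Prop :=
  ∀ γ ∈ Gamma0 L, ∀ τ : ℍ, f (γ • τ) =
    χ (((γ : SL(2, ℤ)) 1 1 : ℤ) : ZMod N) *
      ((((γ : SL(2, ℤ)) 1 0 : ℤ) : ℂ) * τ + (((γ : SL(2, ℤ)) 1 1 : ℤ) : ℂ)) ^ k * f τ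

lemma coe_sl_int_smul (γ : SL(2, ℤ)) (τ : ℍ) :
    ((γ • τ : ℍ) : ℂ) = (((γ 0 0 : ℤ) : ℂ) * τ + ((γ 0 1 : ℤ) : ℂ)) /
      (((γ 1 0 : ℤ) : ℂ) * τ + ((γ 1 1 : ℤ) : ℂ)) := by
  rw [coe_specialLinearGroup_apply]
  simp

lemma sl_int_det (γ : SL(2, ℤ)) : γ 0 0 * γ 1 1 - γ 0 1 * γ 1 0 = 1 := by
  rw [← Matrix.det_fin_two, γ.det_coe]

lemma isCoprime_of_mem_Gamma0 {L : ℕ} {γ : SL(2, ℤ)} (hγ : γ ∈ Gamma0 L) :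
    IsCoprime (γ 1 1) (L : ℤ) := by
  obtain ⟨e, he⟩ := (ZMod.intCast_zmod_eq_zero_iff_dvd _ _).mp (Gamma0_mem.mp hγ)
  exact ⟨γ 0 0, -(γ 0 1 * e), by linear_combination sl_int_det γ + γ 0 1 * he⟩

lemma sum_range_eq_sum_zmod {β : Type*} [AddCommMonoid β] {M : ℕ} [NeZero M] (G : ZMod M → β) :
    ∑ s ∈ Finset.range M, G s = ∑ x, G x :=
  Finset.sum_nbij' (↑) ZMod.val (by simp) (fun x _ => by simpa using ZMod.val_lt x)
    (fun s hs => ZMod.val_natCast_of_lt (Finset.mem_range.mp hs)) (by simp) (by simp)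

lemma sum_range_apply_vadd_mul {β : Type*} [AddCommMonoid β] {F : ℍ → β}
    (hF : ∀ (n : ℤ) (τ : ℍ), F ((n : ℝ) +ᵥ τ) = F τ) {M : ℕ} (hM : M ≠ 0) {u : ℤ}
    (hu : IsCoprime u M) (τ : ℍ) :
    ∑ s ∈ Finset.range M, F (((s * u : ℤ) : ℝ) / M +ᵥ τ) =
      ∑ s ∈ Finset.range M, F ((s : ℝ) / M +ᵥ τ) := by
  have : NeZero M := ⟨hM⟩
  set G : ZMod M → β := fun x => F ((x.val : ℝ) / M +ᵥ τ)
  have hG (n : ℤ) : F ((n : ℝ) / M +ᵥ τ) = G n := by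
    have hn : (n : ℝ) / M = ((n / M : ℤ) : ℝ) + ((n : ZMod M).val : ℝ) / M := by
      rw [← Int.cast_natCast (ZMod.val _), ZMod.val_intCast]
      have hMR : (M : ℝ) ≠ 0 := by exact_mod_cast hM
      field_simp
      exact_mod_cast (Int.mul_ediv_add_emod n M).symm
    rw [hn, ← vadd_vadd, hF]
  let v := ZMod.unitOfIsCoprime u hu
  calc ∑ s ∈ Finset.range M, F (((s * u : ℤ) : ℝ) / M +ᵥ τ)
      = ∑ s ∈ Finset.range M, G (v * s) := by
        refine Finset.sum_congr rfl fun s _ => ?_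
        rw [hG, ZMod.coe_unitOfIsCoprime]
        push_cast
        ring_nf
    _ = ∑ x, G (v * x) := sum_range_eq_sum_zmod fun x : ZMod M => G (v * x)
    _ = ∑ x, G x := Equiv.sum_comp (Units.mulLeft v) G
    _ = ∑ s ∈ Finset.range M, F ((s : ℝ) / M +ᵥ τ) := by
        rw [← sum_range_eq_sum_zmod]
        refine Finset.sum_congr rfl fun s hs => ?_
        simp only [G, ZMod.val_natCast_of_lt (Finset.mem_range.mp hs)]

section

variable {N : ℕ} {L k : ℕ} {χ : DirichletCharacter ℂ N} {f : ℍ → ℂ}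

lemma IsSlashEquivariant.apply_intCast_vadd (hf : IsSlashEquivariant L k χ f) (n : ℤ) (τ : ℍ) :
    f ((n : ℝ) +ᵥ τ) = f τ := by
  have hT : ModularGroup.T ^ n ∈ Gamma0 L := by
    simp [Gamma0_mem, ModularGroup.coe_T_zpow]
  rw [← modular_T_zpow_smul, hf _ hT τ]
  simp [ModularGroup.coe_T_zpow]

lemma exists_mem_Gamma0_smul_vadd {M : ℕ} (hM : M ≠ 0) {γ : SL(2, ℤ)}
    (hγ : γ ∈ Gamma0 (N * M ^ 2)) (s : ℤ) (τ : ℍ) :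
    ∃ γ' ∈ Gamma0 N, ((γ' 1 1 : ℤ) : ZMod N) = ((γ 1 1 : ℤ) : ZMod N) ∧
      ((γ' 1 0 : ℤ) : ℂ) * ↑(((s * γ 1 1 ^ 2 : ℤ) : ℝ) / M +ᵥ τ) + ((γ' 1 1 : ℤ) : ℂ) =
        ((γ 1 0 : ℤ) : ℂ) * τ + ((γ 1 1 : ℤ) : ℂ) ∧
      γ' • (((s * γ 1 1 ^ 2 : ℤ) : ℝ) / M +ᵥ τ) = (s : ℝ) / M +ᵥ γ • τ := by
  obtain ⟨e, he⟩ := (ZMod.intCast_zmod_eq_zero_iff_dvd _ _).mp (Gamma0_mem.mp hγ)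
  push_cast at he
  have hγτ := coe_sl_int_smul γ τ
  have hcτd : ((γ 1 0 : ℤ) : ℂ) * τ + ((γ 1 1 : ℤ) : ℂ) ≠ 0 := by
    have := denom_ne_zero γ τ
    rwa [ModularGroup.denom_apply] at this
  set a := γ 0 0
  set b := γ 0 1
  set c := γ 1 0
  set d := γ 1 1
  have hdet : a * d - b * c = 1 := sl_int_det γ
  let γ' : SL(2, ℤ) := ⟨!![a + s * N * M * e, b - s * d * b * N * M * e - s ^ 2 * d ^ 2 * N * e;
      c, d - s * d ^ 2 * N * M * e], by
    rw [Matrix.det_fin_two_of]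
    linear_combination (1 - s * N * M * e * d) * hdet + s ^ 2 * d ^ 2 * N * e * he⟩
  have hMC : (M : ℂ) ≠ 0 := by exact_mod_cast hM
  have heC : (c : ℂ) = N * M ^ 2 * e := by exact_mod_cast he
  have hdetC : (a : ℂ) * d - b * c = 1 := by exact_mod_cast hdet
  have hden : ((γ' 1 0 : ℤ) : ℂ) * ↑(((s * d ^ 2 : ℤ) : ℝ) / M +ᵥ τ) + ((γ' 1 1 : ℤ) : ℂ) =
      c * τ + d := by
    simp [γ']
    field_simp
    linear_combination (s * d ^ 2) * heC
  refine ⟨γ', Gamma0_mem.mpr (by simp [γ', he]), by simp [γ'], hden, ?_⟩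
  apply UpperHalfPlane.ext
  rw [coe_sl_int_smul, hden, coe_vadd, coe_vadd, hγτ, div_eq_iff hcτd, add_mul,
    div_mul_cancel₀ _ hcτd]
  simp [γ']
  field_simp
  linear_combination (s * d) * hdetC + s * (b * d - τ) * heC

lemma IsSlashEquivariant.apply_vadd_smul (hf : IsSlashEquivariant N k χ f) {M : ℕ} (hM : M ≠ 0)
    {γ : SL(2, ℤ)} (hγ : γ ∈ Gamma0 (N * M ^ 2)) (s : ℤ) (τ : ℍ) :
    f ((s : ℝ) / M +ᵥ γ • τ) = χ ((γ 1 1 : ℤ) : ZMod N) *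
      (((γ 1 0 : ℤ) : ℂ) * τ + ((γ 1 1 : ℤ) : ℂ)) ^ k *
        f (((s * γ 1 1 ^ 2 : ℤ) : ℝ) / M +ᵥ τ) := by
  obtain ⟨γ', hγ', hχ, hden, hsmul⟩ := exists_mem_Gamma0_smul_vadd hM hγ s τ
  rw [← hsmul, hf γ' hγ', hχ, hden]

end

theorem stmt_12_general (N M k : ℕ) (hM : 0 < M)
    (χ : DirichletCharacter ℂ N) (f : ℍ → ℂ)
    (hf : ∀ γ ∈ Gamma0 N, ∀ τ : ℍ, f (γ • τ) =
      χ (((γ : SL(2, ℤ)) 1 1 : ℤ) : ZMod N) *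
        ((((γ : SL(2, ℤ)) 1 0 : ℤ) : ℂ) * τ + (((γ : SL(2, ℤ)) 1 1 : ℤ) : ℂ)) ^ k * f τ)
    (g : ℍ → ℂ)
    (hg : ∀ τ : ℍ, g τ = (M : ℂ)⁻¹ * ∑ s ∈ Finset.range M, f (((s : ℝ) / (M : ℝ)) +ᵥ τ)) :
    ∀ γ ∈ Gamma0 (N * M ^ 2), ∀ τ : ℍ, g (γ • τ) =
      χ (((γ : SL(2, ℤ)) 1 1 : ℤ) : ZMod N) *
        ((((γ : SL(2, ℤ)) 1 0 : ℤ) : ℂ) * τ + (((γ : SL(2, ℤ)) 1 1 : ℤ) : ℂ)) ^ k * g τ := by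
  intro γ hγ τ
  have hf' : IsSlashEquivariant N k χ f := hf
  have hd : IsCoprime (γ 1 1 ^ 2) (M : ℤ) := by
    have h := isCoprime_of_mem_Gamma0 hγ
    push_cast at h
    exact ((IsCoprime.pow_right_iff two_pos).mp h.of_mul_right_right).pow_left
  rw [hg, hg, ← sum_range_apply_vadd_mul hf'.apply_intCast_vadd hM.ne' hd τ,
    Finset.mul_sum, Finset.mul_sum, Finset.mul_sum]
  refine Finset.sum_congr rfl fun s _ => ?_
  rw [← Int.cast_natCast s, hf'.apply_vadd_smul hM.ne' hγ]
  ring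

/-- Degree 1 case of the nebentypus part of Theorem 4.1 of the paper: if
`f : ℍ → ℂ` satisfies the weight-`k` equivariance `f∣[k]γ = χ(d)·f` for all
`γ ∈ Γ₀(N)` (with `χ` a Dirichlet character mod `N`), then
`g(τ) = (1/M) Σ_{s=0}^{M-1} f(τ + s/M)` satisfies `g∣[k]γ = χ(d)·g` for all
`γ ∈ Γ₀(N M²)`. -/
theorem stmt_12 (N M k : ℕ) (hN : 0 < N) (hM : 0 < M) (hk : 0 < k)
    (χ : DirichletCharacter ℂ N) (f : ℍ → ℂ)
    (hf : ∀ γ ∈ Gamma0 N, ∀ τ : ℍ, f (γ • τ) =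
      χ (((γ : SL(2, ℤ)) 1 1 : ℤ) : ZMod N) *
        ((((γ : SL(2, ℤ)) 1 0 : ℤ) : ℂ) * τ + (((γ : SL(2, ℤ)) 1 1 : ℤ) : ℂ)) ^ k * f τ)
    (g : ℍ → ℂ)
    (hg : ∀ τ : ℍ, g τ = (M : ℂ)⁻¹ * ∑ s ∈ Finset.range M, f (((s : ℝ) / (M : ℝ)) +ᵥ τ)) :
    ∀ γ ∈ Gamma0 (N * M ^ 2), ∀ τ : ℍ, g (γ • τ) =
      χ (((γ : SL(2, ℤ)) 1 1 : ℤ) : ZMod N) *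
        ((((γ : SL(2, ℤ)) 1 0 : ℤ) : ℂ) * τ + (((γ : SL(2, ℤ)) 1 1 : ℤ) : ℂ)) ^ k * g τ :=
  stmt_12_general N M k hM χ f hf g hg
end

section
/- Let n, N, M be positive integers. Let g = [[A, B],[C, D]] (block decomposition into n×n blocks) be a matrix in Sp(2n, ℤ), i.e. an integer 2n×2n matrix with ᵗg J g = J where J = [[0, 1ₙ],[−1ₙ, 0]], and suppose every entry of C is divisible by N M². Let S be a symmetric n×n integer matrix, and set S̃ := ᵗD S D (also a symmetric integer matrix). Then the matrix g̃ := [[1ₙ, S/M],[0, 1ₙ]] · g · [[1ₙ, S̃/M],[0, 1ₙ]]⁻¹, computed in GL(2n, ℚ), has integer entries and lies in Sp(2n, ℤ); moreover its lower-left n×n block equals C (in particular is divisible by N), and its lower-right n×n block is congruent to D modulo M. -/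
/-!
Write `C = M²E`. Multiplying out, `[[1, S/M], [0, 1]] · g · [[1, S̃/M], [0, 1]]⁻¹` has blocks
`A + M S E`, `B - M B Eᵀ S D - S E S̃`, `C` and `D - M E S̃`. Only the upper-right block needs an
argument: there the symplectic relation `A Dᵀ = 1 + B Cᵀ` turns `A S̃ / M = A Dᵀ S D / M` into
`S D / M` plus an integral matrix, and `S D / M` cancels. The result is symplectic because it is
so over `ℚ`, where it is a product of `g` with unipotent matrices `[[1, X], [0, 1]]`, `X`
symmetric.
-/

open Matrix

namespace SymplecticGroup

variable {l R : Type*} [Fintype l] [DecidableEq l] [CommRing R]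

theorem mem_iff_transpose_mul_fromBlocks_mul {A : Matrix (l ⊕ l) (l ⊕ l) R} :
    A ∈ symplecticGroup l R ↔
      Aᵀ * fromBlocks 0 1 (-1) 0 * A = fromBlocks 0 1 (-1) 0 := by
  have hJ : (fromBlocks 0 1 (-1) 0 : Matrix (l ⊕ l) (l ⊕ l) R) = -J l R := by
    simp [J, fromBlocks_neg]
  rw [mem_iff', hJ, Matrix.mul_neg, Matrix.neg_mul, neg_inj]

theorem mul_transpose_sub_mul_transpose_eq_one {A B C D : Matrix l l R}
    (h : fromBlocks A B C D ∈ symplecticGroup l R) : A * Dᵀ - B * Cᵀ = 1 := by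
  rw [← transpose_mem_iff, fromBlocks_transpose, fromBlocks_mem_iff] at h
  simpa using h.2.2

theorem fromBlocks_one_zero_one_mem {X : Matrix l l R} (hX : Xᵀ = X) :
    fromBlocks 1 X 0 (1 : Matrix l l R) ∈ symplecticGroup l R :=
  fromBlocks_mem_iff.2 ⟨by simp, by simp [hX], by simp⟩

theorem of_map_mem {S : Type*} [CommRing S] {f : R →+* S} (hf : Function.Injective f)
    {A : Matrix (l ⊕ l) (l ⊕ l) R} (h : A.map f ∈ symplecticGroup l S) :
    A ∈ symplecticGroup l R := by
  rw [mem_iff] at h ⊢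
  apply Matrix.map_injective hf
  simpa [Matrix.map_mul, transpose_map] using h

end SymplecticGroup

namespace Matrix

variable {l R K : Type*} [Fintype l] [DecidableEq l] [CommRing R] [Field K]

theorem inv_fromBlocks_one_zero_one (X : Matrix l l R) :
    (fromBlocks 1 X 0 1 : Matrix (l ⊕ l) (l ⊕ l) R)⁻¹ = fromBlocks 1 (-X) 0 1 := by
  simp [inv_fromBlocks_zero₂₁_of_isUnit_iff]

def twistedMatrix (m : R) (A B D E S : Matrix l l R) : Matrix (l ⊕ l) (l ⊕ l) R :=
  fromBlocks (A + m • (S * E)) (B - m • (B * Eᵀ * S * D) - S * E * (Dᵀ * S * D))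
    (m ^ 2 • E) (D - m • (E * (Dᵀ * S * D)))

omit [DecidableEq l] in
theorem map_twistedMatrix {R' : Type*} [CommRing R'] (f : R →+* R') (m : R)
    (A B D E S : Matrix l l R) :
    (twistedMatrix m A B D E S).map f =
      twistedMatrix (f m) (A.map f) (B.map f) (D.map f) (E.map f) (S.map f) := by
  simp [twistedMatrix, fromBlocks_map, Matrix.map_sub, Matrix.map_add, Matrix.map_mul,
    Matrix.map_smul', transpose_map]

theorem twistedMatrix_eq {m : K} (hm : m ≠ 0) {A B D E : Matrix l l K}
    (hAD : A * Dᵀ - B * (m ^ 2 • E)ᵀ = 1) (S : Matrix l l K) :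
    twistedMatrix m A B D E S =
      fromBlocks 1 (m⁻¹ • S) 0 1 * fromBlocks A B (m ^ 2 • E) D *
        (fromBlocks 1 (m⁻¹ • (Dᵀ * S * D)) 0 1)⁻¹ := by
  have hA : A * Dᵀ = 1 + m ^ 2 • (B * Eᵀ) := by
    rw [← hAD]; simp
  rw [inv_fromBlocks_one_zero_one, fromBlocks_multiply, fromBlocks_multiply, twistedMatrix]
  simp only [Matrix.one_mul, Matrix.zero_mul, Matrix.mul_one, Matrix.mul_zero, add_zero,
    zero_add, smul_mul_assoc, mul_smul_comm, smul_smul, Matrix.add_mul, Matrix.mul_neg,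
    smul_neg, ← Matrix.mul_assoc]
  congr 1
  · match_scalars <;> field_simp
  · rw [hA]
    simp only [smul_mul_assoc, Matrix.add_mul, Matrix.one_mul]
    match_scalars <;> field_simp
    ring
  · match_scalars <;> field_simp

theorem map_twistedMatrix_eq (f : R →+* K) {m : R} (hm : f m ≠ 0) {A B D E : Matrix l l R}
    (hg : fromBlocks A B (m ^ 2 • E) D ∈ symplecticGroup l R) (S : Matrix l l R) :
    (twistedMatrix m A B D E S).map f =
      fromBlocks 1 ((f m)⁻¹ • S.map f) 0 1 * (fromBlocks A B (m ^ 2 • E) D).map f *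
        (fromBlocks 1 ((f m)⁻¹ • (Dᵀ * S * D).map f) 0 1)⁻¹ := by
  have hgK := SymplecticGroup.map_mem hg f
  rw [fromBlocks_map, Matrix.map_smul' _ _ _ (map_mul f), map_pow] at hgK ⊢
  rw [map_twistedMatrix, twistedMatrix_eq hm
    (SymplecticGroup.mul_transpose_sub_mul_transpose_eq_one hgK), Matrix.map_mul,
    Matrix.map_mul, transpose_map]

theorem twistedMatrix_mem_symplecticGroup [IsDomain R] {m : R} (hm : m ≠ 0)
    {A B D E S : Matrix l l R} (hg : fromBlocks A B (m ^ 2 • E) D ∈ symplecticGroup l R)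
    (hS : Sᵀ = S) : twistedMatrix m A B D E S ∈ symplecticGroup l R := by
  have hf := IsFractionRing.injective R (FractionRing R)
  refine SymplecticGroup.of_map_mem hf ?_
  rw [map_twistedMatrix_eq _ ((map_ne_zero_iff _ hf).2 hm) hg, inv_fromBlocks_one_zero_one]
  refine mul_mem (mul_mem ?_ (SymplecticGroup.map_mem hg _)) ?_ <;>
    refine SymplecticGroup.fromBlocks_one_zero_one_mem ?_
  · simp [← transpose_map, hS]
  · simp [← transpose_map, transpose_mul, hS, Matrix.mul_assoc]

end Matrix

theorem stmt_13_general (n N M : ℕ) (hM : 0 < M)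
    (A B C D : Matrix (Fin n) (Fin n) ℤ)
    (hsymp : (fromBlocks A B C D)ᵀ * fromBlocks 0 1 (-1) 0 * fromBlocks A B C D
      = fromBlocks 0 1 (-1) 0)
    (hC : ∀ i j, ((N : ℤ) * (M : ℤ) ^ 2) ∣ C i j)
    (S : Matrix (Fin n) (Fin n) ℤ) (hS : Sᵀ = S) :
    ∃ G : Matrix (Fin n ⊕ Fin n) (Fin n ⊕ Fin n) ℤ,
      G.map (fun x : ℤ => (x : ℚ)) =
        fromBlocks 1 ((M : ℚ)⁻¹ • S.map (fun x : ℤ => (x : ℚ))) 0 1 *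
          (fromBlocks A B C D).map (fun x : ℤ => (x : ℚ)) *
          (fromBlocks 1 ((M : ℚ)⁻¹ • (Dᵀ * S * D).map (fun x : ℤ => (x : ℚ))) 0 1)⁻¹ ∧
      Gᵀ * fromBlocks 0 1 (-1) 0 * G = fromBlocks 0 1 (-1) 0 ∧
      G.toBlocks₂₁ = C ∧
      (∀ i j, (N : ℤ) ∣ G.toBlocks₂₁ i j) ∧
      (∀ i j, (M : ℤ) ∣ (G.toBlocks₂₂ i j - D i j)) := by
  choose E hE using hC
  obtain rfl : C = (M : ℤ) ^ 2 • (N : ℤ) • of E := by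
    ext i j; simp only [hE, Matrix.smul_apply, of_apply, smul_eq_mul]; ring
  have hg := SymplecticGroup.mem_iff_transpose_mul_fromBlocks_mul.2 hsymp
  have hMℤ : (M : ℤ) ≠ 0 := by positivity
  have hGℚ := map_twistedMatrix_eq (Int.castRingHom ℚ) (by simpa using hMℤ) hg S
  rw [eq_intCast, Int.cast_natCast] at hGℚ
  refine ⟨twistedMatrix (M : ℤ) A B D ((N : ℤ) • of E) S, hGℚ, ?_, rfl, ?_, ?_⟩
  · exact SymplecticGroup.mem_iff_transpose_mul_fromBlocks_mul.1
      (twistedMatrix_mem_symplecticGroup hMℤ hg hS)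
  · simp only [twistedMatrix, toBlocks_fromBlocks₂₁, Matrix.smul_apply, smul_eq_mul, of_apply]
    exact fun i j => (dvd_mul_right _ _).mul_left _
  · simp only [twistedMatrix, toBlocks_fromBlocks₂₂, Matrix.sub_apply, Matrix.smul_apply,
      smul_eq_mul, sub_sub_cancel_left]
    exact fun i j => (dvd_mul_right _ _).neg_right

/-- Key matrix computation in the proof of Theorem 4.1 of the paper: for
`g = [[A,B],[C,D]] ∈ Sp(2n, ℤ)` with `C ≡ 0 mod N·M²` and `S` a symmetric integer
matrix, the matrix `g̃ = [[1, S/M],[0,1]] · g · [[1, S̃/M],[0,1]]⁻¹` (computed in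
`GL(2n, ℚ)`, where `S̃ = ᵗD S D`) has integer entries, lies in `Sp(2n, ℤ)`, its
lower-left block equals `C` (in particular is divisible by `N`) and its
lower-right block is congruent to `D` modulo `M`. -/
theorem stmt_13 (n N M : ℕ) (hn : 0 < n) (hN : 0 < N) (hM : 0 < M)
    (A B C D : Matrix (Fin n) (Fin n) ℤ)
    (hsymp : (fromBlocks A B C D)ᵀ * fromBlocks 0 1 (-1) 0 * fromBlocks A B C D
      = fromBlocks 0 1 (-1) 0)
    (hC : ∀ i j, ((N : ℤ) * (M : ℤ) ^ 2) ∣ C i j)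
    (S : Matrix (Fin n) (Fin n) ℤ) (hS : Sᵀ = S) :
    ∃ G : Matrix (Fin n ⊕ Fin n) (Fin n ⊕ Fin n) ℤ,
      G.map (fun x : ℤ => (x : ℚ)) =
        fromBlocks 1 ((M : ℚ)⁻¹ • S.map (fun x : ℤ => (x : ℚ))) 0 1 *
          (fromBlocks A B C D).map (fun x : ℤ => (x : ℚ)) *
          (fromBlocks 1 ((M : ℚ)⁻¹ • (Dᵀ * S * D).map (fun x : ℤ => (x : ℚ))) 0 1)⁻¹ ∧
      Gᵀ * fromBlocks 0 1 (-1) 0 * G = fromBlocks 0 1 (-1) 0 ∧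
      G.toBlocks₂₁ = C ∧
      (∀ i j, (N : ℤ) ∣ G.toBlocks₂₁ i j) ∧
      (∀ i j, (M : ℤ) ∣ (G.toBlocks₂₂ i j - D i j)) :=
  stmt_13_general n N M hM A B C D hsymp hC S hS
end
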